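/- The FEF of the isotropic state ρ_iso(f) = ((1−f)/(d²−1)) I + ((d²f−1)/(d²−1)) |ψ⁺⟩⟨ψ⁺| on C^d ⊗ C^d equals f when 1/d² ≤ f ≤ 1, and equals (1−f)/(d²−1) when 0 ≤ f < 1/d². -/

import Mathlib

open Matrix Complex BigOperators Finset

noncomputable section

/-- The maximally entangled state `|ψ⁺⟩ = (1/√d) ∑ₖ |kk⟩` on `ℂ^d ⊗ ℂ^d`. -/
def psiPlus (d : ℕ) : (Fin d × Fin d) → ℂ :=
  fun p => if p.1 = p.2 then ((1 / Real.sqrt d : ℝ) : ℂ) else 0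

/-- `U ⊗ I` acting on `ℂ^d ⊗ ℂ^d`. -/
def tensorI {d : ℕ} (U : Matrix (Fin d) (Fin d) ℂ) :
    Matrix (Fin d × Fin d) (Fin d × Fin d) ℂ :=
  fun p q => U p.1 q.1 * (if p.2 = q.2 then 1 else 0)

/-- The rank-one projector `|ψ⟩⟨ψ|`. -/
def outer {n : Type*} [Fintype n] (ψ : n → ℂ) : Matrix n n ℂ :=
  Matrix.vecMulVec ψ (star ψ)

/-- The fully entangled fraction
`F(ρ) = max_U ⟨ψ⁺| (U† ⊗ I) ρ (U ⊗ I) |ψ⁺⟩`. -/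
def fef (d : ℕ) (ρ : Matrix (Fin d × Fin d) (Fin d × Fin d) ℂ) : ℝ :=
  sSup { x : ℝ | ∃ U ∈ Matrix.unitaryGroup (Fin d) ℂ,
    x = (star (tensorI U *ᵥ psiPlus d) ⬝ᵥ (ρ *ᵥ (tensorI U *ᵥ psiPlus d))).re }

/-- The isotropic state on `ℂ^d ⊗ ℂ^d`. -/
def isotropic (d : ℕ) (f : ℝ) : Matrix (Fin d × Fin d) (Fin d × Fin d) ℂ :=
  ((1 - f) / ((d : ℝ) ^ 2 - 1)) • (1 : Matrix (Fin d × Fin d) (Fin d × Fin d) ℂ) +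
    (((d : ℝ) ^ 2 * f - 1) / ((d : ℝ) ^ 2 - 1)) • outer (psiPlus d)

/-! For a unit vector `v`, `⟨v|(a I + b |ψ⁺⟩⟨ψ⁺|)|v⟩ = a + b |⟨ψ⁺|v⟩|²`, and for `v = (U ⊗ I)|ψ⁺⟩`
the overlap `⟨ψ⁺|v⟩` is `tr U / d`. As `U` ranges over the unitary group, `t = |tr U|² / d²` stays
in `[0, 1]` and attains both ends (`U = I` and the cyclic shift), so the supremum of the affine
function `a + b t` is `max a (a + b) = max ((1 - f) / (d² - 1)) f`. -/

open scoped Kronecker ComplexConjugate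

lemma tensorI_eq_kronecker {d : ℕ} (U : Matrix (Fin d) (Fin d) ℂ) : tensorI U = U ⊗ₖ 1 := by
  ext p q
  simp [tensorI, kroneckerMap_apply, one_apply]

lemma tensorI_mem_unitaryGroup {d : ℕ} {U : Matrix (Fin d) (Fin d) ℂ}
    (hU : U ∈ unitaryGroup (Fin d) ℂ) : tensorI U ∈ unitaryGroup (Fin d × Fin d) ℂ := by
  rw [tensorI_eq_kronecker]
  exact kronecker_mem_unitary hU (one_mem _)

lemma star_mulVec_dotProduct_mulVec_of_mem_unitaryGroup {n R : Type*} [Fintype n]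
    [DecidableEq n] [CommRing R] [StarRing R] {W : Matrix n n R} (hW : W ∈ unitaryGroup n R)
    (v : n → R) : star (W *ᵥ v) ⬝ᵥ (W *ᵥ v) = star v ⬝ᵥ v := by
  rw [star_mulVec, ← dotProduct_mulVec, mulVec_mulVec, ← star_eq_conjTranspose,
    mem_unitaryGroup_iff'.mp hW, one_mulVec]

lemma outer_mulVec {n : Type*} [Fintype n] (ψ v : n → ℂ) :
    outer ψ *ᵥ v = (star ψ ⬝ᵥ v) • ψ := by
  ext p
  simp only [outer, mulVec, vecMulVec_apply, dotProduct, Pi.smul_apply, smul_eq_mul,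
    Finset.sum_mul]
  exact Finset.sum_congr rfl fun q _ => by ring

lemma re_star_dotProduct_smul_one_add_smul_outer_mulVec {n : Type*} [Fintype n] [DecidableEq n]
    (a b : ℝ) (ψ v : n → ℂ) (hv : star v ⬝ᵥ v = 1) :
    (star v ⬝ᵥ ((a • 1 + b • outer ψ) *ᵥ v)).re = a + b * normSq (star ψ ⬝ᵥ v) := by
  have hconj : star v ⬝ᵥ ψ = conj (star ψ ⬝ᵥ v) := star_dotProduct v ψ
  rw [add_mulVec, smul_mulVec, smul_mulVec, one_mulVec, outer_mulVec, dotProduct_add,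
    dotProduct_smul, dotProduct_smul, dotProduct_smul, hv, hconj, smul_eq_mul, mul_conj]
  simp

lemma tensorI_mulVec_psiPlus {d : ℕ} (U : Matrix (Fin d) (Fin d) ℂ) :
    tensorI U *ᵥ psiPlus d = fun p => U p.1 p.2 * ((1 / Real.sqrt d : ℝ) : ℂ) := by
  ext p
  simp [tensorI, psiPlus, mulVec, dotProduct, Fintype.sum_prod_type, mul_ite, ite_mul]

lemma star_psiPlus_dotProduct_tensorI_mulVec (d : ℕ) (U : Matrix (Fin d) (Fin d) ℂ) :
    star (psiPlus d) ⬝ᵥ (tensorI U *ᵥ psiPlus d) = trace U / d := by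
  have hsq : ((√d : ℝ) : ℂ)⁻¹ * ((√d : ℝ) : ℂ)⁻¹ = (d : ℂ)⁻¹ := by
    rw [← mul_inv, ← ofReal_mul, Real.mul_self_sqrt d.cast_nonneg, ofReal_natCast]
  rw [tensorI_mulVec_psiPlus]
  simp [dotProduct, psiPlus, Fintype.sum_prod_type, apply_ite (starRingEnd ℂ), ite_mul, trace,
    div_eq_mul_inv]
  rw [Finset.sum_mul, ← hsq]
  exact Finset.sum_congr rfl fun k _ => by ring

lemma star_psiPlus_dotProduct_self {d : ℕ} (hd : d ≠ 0) : star (psiPlus d) ⬝ᵥ psiPlus d = 1 := by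
  have h := star_psiPlus_dotProduct_tensorI_mulVec d 1
  rwa [tensorI_eq_kronecker, one_kronecker_one, one_mulVec, trace_one, Fintype.card_fin,
    div_self (Nat.cast_ne_zero.mpr hd)] at h

def entangledFidelity (d : ℕ) (ρ : Matrix (Fin d × Fin d) (Fin d × Fin d) ℂ)
    (U : Matrix (Fin d) (Fin d) ℂ) : ℝ :=
  (star (tensorI U *ᵥ psiPlus d) ⬝ᵥ (ρ *ᵥ (tensorI U *ᵥ psiPlus d))).re

lemma fef_eq_sSup_image_entangledFidelity (d : ℕ)
    (ρ : Matrix (Fin d × Fin d) (Fin d × Fin d) ℂ) :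
    fef d ρ = sSup (entangledFidelity d ρ '' (unitaryGroup (Fin d) ℂ : Set _)) := by
  rw [fef]
  congr 1
  ext x
  exact exists_congr fun U => and_congr_right fun _ => eq_comm

lemma entangledFidelity_isotropic {d : ℕ} (hd : d ≠ 0) (f : ℝ) {U : Matrix (Fin d) (Fin d) ℂ}
    (hU : U ∈ unitaryGroup (Fin d) ℂ) :
    entangledFidelity d (isotropic d f) U =
      (1 - f) / ((d : ℝ) ^ 2 - 1) +
        ((d : ℝ) ^ 2 * f - 1) / ((d : ℝ) ^ 2 - 1) * (normSq (trace U) / (d : ℝ) ^ 2) := by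
  have hv : star (tensorI U *ᵥ psiPlus d) ⬝ᵥ (tensorI U *ᵥ psiPlus d) = 1 := by
    rw [star_mulVec_dotProduct_mulVec_of_mem_unitaryGroup (tensorI_mem_unitaryGroup hU),
      star_psiPlus_dotProduct_self hd]
  rw [entangledFidelity, isotropic, re_star_dotProduct_smul_one_add_smul_outer_mulVec _ _ _ _ hv,
    star_psiPlus_dotProduct_tensorI_mulVec, normSq_div, normSq_natCast, ← sq]

lemma normSq_trace_le_of_mem_unitaryGroup {n : Type*} [Fintype n] [DecidableEq n]
    {U : Matrix n n ℂ} (hU : U ∈ unitaryGroup n ℂ) :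
    normSq (trace U) ≤ (Fintype.card n : ℝ) ^ 2 := by
  have htr : ‖trace U‖ ≤ Fintype.card n :=
    calc ‖trace U‖ ≤ ∑ i, ‖U i i‖ := norm_sum_le _ _
      _ ≤ ∑ _i : n, (1 : ℝ) := Finset.sum_le_sum fun i _ => entry_norm_bound_of_unitary hU i i
      _ = Fintype.card n := by simp
  rw [← Complex.sq_norm]
  exact pow_le_pow_left₀ (norm_nonneg _) htr 2

lemma permMatrix_mem_unitaryGroup {n R : Type*} [Fintype n] [DecidableEq n] [CommRing R]
    [StarRing R] (σ : Equiv.Perm n) : σ.permMatrix R ∈ unitaryGroup n R := by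
  rw [mem_unitaryGroup_iff', star_eq_conjTranspose, conjTranspose_permMatrix, ← permMatrix_mul,
    mul_inv_cancel, permMatrix_one]

lemma trace_permMatrix_finRotate {d : ℕ} (R : Type*) [AddCommMonoidWithOne R] (hd : 2 ≤ d) :
    trace ((finRotate d).permMatrix R) = 0 := by
  have : Function.fixedPoints (finRotate d) = ∅ := by
    ext i
    simpa [Function.IsFixedPt, support_finRotate_of_le hd] using
      (Equiv.Perm.mem_support (f := finRotate d) (x := i))
  rw [trace_permutation, this, Set.ncard_empty, Nat.cast_zero]

lemma csSup_image_affine_eq_max {T : Set ℝ} (hT : T ⊆ Set.Icc 0 1) (h0 : 0 ∈ T) (h1 : 1 ∈ T)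
    (a b : ℝ) : sSup ((fun t => a + b * t) '' T) = max a (a + b) := by
  refine IsGreatest.csSup_eq ⟨?_, ?_⟩
  · rcases le_total a (a + b) with h | h
    · exact ⟨1, h1, by simp [max_eq_right h]⟩
    · exact ⟨0, h0, by simp [max_eq_left h]⟩
  · rintro _ ⟨t, ht, rfl⟩
    obtain ⟨ht0, ht1⟩ := hT ht
    nlinarith [mul_nonneg (sub_nonneg.mpr ht1) (sub_nonneg.mpr (le_max_left a (a + b))),
      mul_nonneg ht0 (sub_nonneg.mpr (le_max_right a (a + b)))]

lemma natCast_sq_sub_one_pos {d : ℕ} (hd : 2 ≤ d) : (0 : ℝ) < (d : ℝ) ^ 2 - 1 := by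
  have : (2 : ℝ) ≤ d := by exact_mod_cast hd
  nlinarith

theorem fef_isotropic_eq_max {d : ℕ} (hd : 2 ≤ d) (f : ℝ) :
    fef d (isotropic d f) = max ((1 - f) / ((d : ℝ) ^ 2 - 1)) f := by
  have hd0 : (d : ℝ) ^ 2 ≠ 0 := by positivity
  have hd1 : (d : ℝ) ^ 2 - 1 ≠ 0 := (natCast_sq_sub_one_pos hd).ne'
  set T := (fun U : Matrix (Fin d) (Fin d) ℂ => normSq (trace U) / (d : ℝ) ^ 2) ''
    unitaryGroup (Fin d) ℂ
  have hT : T ⊆ Set.Icc 0 1 := by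
    rintro _ ⟨U, hU, rfl⟩
    refine ⟨div_nonneg (normSq_nonneg _) (sq_nonneg _), div_le_one_of_le₀ ?_ (sq_nonneg _)⟩
    simpa using normSq_trace_le_of_mem_unitaryGroup hU
  have h0 : 0 ∈ T := ⟨_, permMatrix_mem_unitaryGroup (finRotate d),
    by simp [trace_permMatrix_finRotate ℂ hd]⟩
  have h1 : 1 ∈ T := ⟨1, one_mem _,
    by simp only [trace_one, Fintype.card_fin, normSq_natCast, ← sq, div_self hd0]⟩
  rw [fef_eq_sSup_image_entangledFidelity,
    Set.image_congr fun U hU => entangledFidelity_isotropic (by omega) f hU,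
    ← Set.image_image (fun t => (1 - f) / ((d : ℝ) ^ 2 - 1) + ((d : ℝ) ^ 2 * f - 1) /
      ((d : ℝ) ^ 2 - 1) * t), csSup_image_affine_eq_max hT h0 h1]
  congr 1
  field_simp
  ring

/-- FEF of the isotropic state: `f` for `1/d² ≤ f ≤ 1`, and
`(1−f)/(d²−1)` for `0 ≤ f < 1/d²`. -/
theorem fef_isotropic (d : ℕ) (hd : 2 ≤ d) (f : ℝ) :
    (1 / (d : ℝ) ^ 2 ≤ f → f ≤ 1 → fef d (isotropic d f) = f) ∧
    (0 ≤ f → f < 1 / (d : ℝ) ^ 2 →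
      fef d (isotropic d f) = (1 - f) / ((d : ℝ) ^ 2 - 1)) := by
  have hcross : (1 - f) / ((d : ℝ) ^ 2 - 1) ≤ f ↔ 1 / (d : ℝ) ^ 2 ≤ f := by
    rw [div_le_iff₀ (natCast_sq_sub_one_pos hd), div_le_iff₀ (by positivity)]
    constructor <;> intro h <;> linarith
  rw [fef_isotropic_eq_max hd f]
  exact ⟨fun h _ => max_eq_right (hcross.mpr h),
    fun _ h => max_eq_left (not_le.mp (mt hcross.mp h.not_ge)).le⟩
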